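/- arXiv:1604.06280 — 4 statements merged into one kernel-verified Lean document; each statement's English description precedes it below -/
import Mathlib

section
/- If x is a two-sided sequence over a finite alphabet that is not eventually periodic (aperiodic), then its factor complexity function satisfies p(n) ≥ n + 1 for all n ≥ 1. -/
/-- Complexity of a two-sided sequence: number of distinct words of length `n`. -/
noncomputable def complexityZ {A : Type*} (x : ℤ → A) (n : ℕ) : ℕ :=
  Set.ncard {w : Fin n → A | ∃ m : ℤ, ∀ i : Fin n, w i = x (m + i)}

/-- Eventually periodic for a two-sided sequence. -/
def EventuallyPeriodicZ {A : Type*} (x : ℤ → A) : Prop :=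
  ∃ T : ℤ, 1 ≤ T ∧ ∃ N : ℤ, ∀ m : ℤ, N ≤ m → x (m + T) = x m

namespace MHaux

variable {A : Type*} [Fintype A] (x : ℤ → A)

/-- The set of words of length `n` occurring in `x`. -/
def W (n : ℕ) : Set (Fin n → A) := {w | ∃ m : ℤ, ∀ i : Fin n, w i = x (m + i)}

lemma complexityZ_eq (n : ℕ) : complexityZ x n = (W x n).ncard := rfl

/-- The word of length `n` starting at position `m`. -/
def word (m : ℤ) (n : ℕ) : Fin n → A := fun i => x (m + i)

lemma word_mem (m : ℤ) (n : ℕ) : word x m n ∈ W x n := ⟨m, fun _ => rfl⟩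

lemma W_finite (n : ℕ) : (W x n).Finite := Set.toFinite _

/-- Restriction of a word of length `n+1` to its first `n` letters. -/
def res (n : ℕ) (w : Fin (n + 1) → A) : Fin n → A := fun i => w i.castSucc

lemma image_res (n : ℕ) : res n '' W x (n + 1) = W x n := by
  ext w
  constructor
  · rintro ⟨v, ⟨m, hm⟩, rfl⟩
    refine ⟨m, fun i => ?_⟩
    have := hm i.castSucc
    simpa [res] using this
  · rintro ⟨m, hm⟩
    refine ⟨word x m (n + 1), word_mem x m (n + 1), ?_⟩
    funext i
    simp [res, word, hm i]

lemma complexity_mono (n : ℕ) : complexityZ x n ≤ complexityZ x (n + 1) := by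
  rw [complexityZ_eq, complexityZ_eq, ← image_res]
  exact Set.ncard_image_le (W_finite x (n + 1))

/-- If complexity does not increase from `k` to `k+1`, then every occurring word of
length `k` determines its next letter. -/
lemma ext_right {k : ℕ} (h : complexityZ x (k + 1) ≤ complexityZ x k)
    {m1 m2 : ℤ} (hw : ∀ i : Fin k, x (m1 + i) = x (m2 + i)) :
    x (m1 + k) = x (m2 + k) := by
  have hge : (W x k).ncard ≤ (W x (k + 1)).ncard := by
    rw [← image_res x k]
    exact Set.ncard_image_le (W_finite x (k + 1))
  have hcard : (res (A := A) k '' W x (k + 1)).ncard = (W x (k + 1)).ncard := by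
    rw [image_res]
    exact le_antisymm hge h
  have hinj : Set.InjOn (res (A := A) k) (W x (k + 1)) :=
    Set.injOn_of_ncard_image_eq hcard (W_finite x (k + 1))
  have hweq : word x m1 (k + 1) = word x m2 (k + 1) := by
    apply hinj (word_mem x m1 (k + 1)) (word_mem x m2 (k + 1))
    funext i
    simpa [res, word] using hw i
  have := congrFun hweq ⟨k, Nat.lt_succ_self k⟩
  simpa [word] using this

/-- If complexity drops from `k` to `k+1` and the length-`k` words at two positions
`a < b` coincide, then `x` is eventually periodic. -/
lemma periodic_of_drop {k : ℕ} (hk : complexityZ x (k + 1) ≤ complexityZ x k)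
    {a b : ℕ} (hab : a < b) (hweq : ∀ i : Fin k, x ((a : ℤ) + i) = x ((b : ℤ) + i)) :
    EventuallyPeriodicZ x := by
  set T : ℤ := (b : ℤ) - a with hT
  refine ⟨T, by omega, (a : ℤ) + k, ?_⟩
  have base : ∀ i : Fin k, x ((a : ℤ) + i) = x ((a : ℤ) + T + i) := by
    intro i
    have := hweq i
    rw [this]
    congr 1
    omega
  have Q : ∀ j : ℕ, ∀ i : Fin k, x ((a : ℤ) + j + i) = x ((a : ℤ) + j + T + i) := by
    intro j
    induction j with
    | zero => intro i; simpa using base i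
    | succ j ih =>
      intro i
      by_cases hik : (i : ℕ) + 1 < k
      · have h2 := ih ⟨(i : ℕ) + 1, hik⟩
        have harith1 : (a : ℤ) + j + (((⟨(i : ℕ) + 1, hik⟩ : Fin k) : ℕ) : ℤ)
            = (a : ℤ) + (j + 1 : ℕ) + i := by push_cast; ring
        have harith2 : (a : ℤ) + j + T + (((⟨(i : ℕ) + 1, hik⟩ : Fin k) : ℕ) : ℤ)
            = (a : ℤ) + (j + 1 : ℕ) + T + i := by push_cast; ring
        rw [harith1, harith2] at h2
        exact h2
      · have hik' : (i : ℕ) + 1 = k := by omega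
        have h2 := ext_right x hk (m1 := (a : ℤ) + j) (m2 := (a : ℤ) + j + T) ih
        have harith1 : (a : ℤ) + j + (k : ℕ) = (a : ℤ) + (j + 1 : ℕ) + i := by
          push_cast; omega
        have harith2 : (a : ℤ) + j + T + (k : ℕ) = (a : ℤ) + (j + 1 : ℕ) + T + i := by
          push_cast; omega
        rw [harith1, harith2] at h2
        exact h2
  intro m hm
  obtain ⟨j, hj⟩ : ∃ j : ℕ, m = (a : ℤ) + j + k := ⟨(m - a - k).toNat, by omega⟩
  have h2 := ext_right x hk (m1 := (a : ℤ) + j) (m2 := (a : ℤ) + j + T) (Q j)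
  rw [hj, show (a : ℤ) + j + (k : ℕ) + T = (a : ℤ) + j + T + (k : ℕ) by ring]
  exact h2.symm

end MHaux

open MHaux in
theorem aperiodic_complexity_lower_bound {A : Type*} [Fintype A]
    (x : ℤ → A) (hx : ¬ EventuallyPeriodicZ x) :
    ∀ n : ℕ, 1 ≤ n → n + 1 ≤ complexityZ x n := by
  -- First: if complexity ever fails to grow, x is eventually periodic.
  have key : ∀ k : ℕ, complexityZ x (k + 1) ≤ complexityZ x k → EventuallyPeriodicZ x := by
    intro k hk
    -- find two positions in ℕ with the same word of length k
    have hfin : (W x k).Finite := W_finite x k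
    have : Finite (W x k) := hfin.to_subtype
    obtain ⟨j1, j2, hne, heq⟩ := Finite.exists_ne_map_eq_of_infinite
      (fun j : ℕ => (⟨word x j k, word_mem x j k⟩ : W x k))
    have hweq : ∀ i : Fin k, x ((j1 : ℤ) + i) = x ((j2 : ℤ) + i) := by
      intro i
      have := congrFun (Subtype.ext_iff.mp heq) i
      simpa [word] using this
    rcases hne.lt_or_gt with hlt | hlt
    · exact periodic_of_drop x hk hlt hweq
    · exact periodic_of_drop x hk hlt (fun i => (hweq i).symm)
  -- So complexity is strictly increasing.
  have strict : ∀ k : ℕ, complexityZ x k < complexityZ x (k + 1) := by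
    intro k
    rcases lt_or_ge (complexityZ x k) (complexityZ x (k + 1)) with h | h
    · exact h
    · exact absurd (key k h) hx
  -- complexity at 0 is 1
  have h0 : complexityZ x 0 = 1 := by
    rw [complexityZ]
    have : {w : Fin 0 → A | ∃ m : ℤ, ∀ i : Fin 0, w i = x (m + i)} = Set.univ :=
      Set.eq_univ_of_forall fun w => ⟨0, fun i => i.elim0⟩
    rw [this, Set.ncard_univ]
    simp [Nat.card_eq_fintype_card]
  have main : ∀ n : ℕ, n + 1 ≤ complexityZ x n := by
    intro n
    induction n with
    | zero => omega
    | succ n ih => have := strict n; omega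
  intro n _
  exact main n
end

section
/- If a sequence x over a finite alphabet has complexity p(n₀) ≤ n₀ for some n₀ ≥ 1, then x is eventually periodic. -/
/-- Complexity of a one-sided sequence: number of distinct factors of length `n`. -/
noncomputable def complexityN {A : Type*} (x : ℕ → A) (n : ℕ) : ℕ :=
  Set.ncard {w : Fin n → A | ∃ m : ℕ, ∀ i : Fin n, w i = x (m + i)}

namespace MHaux

variable {A : Type*} [Fintype A]

/-- The set of factors of length `n`. -/
def Fact (x : ℕ → A) (n : ℕ) : Set (Fin n → A) :=
  {w | ∃ m : ℕ, ∀ i : Fin n, w i = x (m + i)}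

lemma fact_image (x : ℕ → A) (n : ℕ) :
    (fun w : Fin (n + 1) → A => w ∘ Fin.castSucc) '' Fact x (n + 1) = Fact x n := by
  ext w
  constructor
  · rintro ⟨u, ⟨m, hm⟩, rfl⟩
    exact ⟨m, fun i => by simpa using hm i.castSucc⟩
  · rintro ⟨m, hm⟩
    refine ⟨fun i => x (m + i), ⟨m, fun i => rfl⟩, ?_⟩
    funext i
    simpa using (hm i).symm

lemma mono (x : ℕ → A) (n : ℕ) : (Fact x n).ncard ≤ (Fact x (n + 1)).ncard := by
  rw [← fact_image x n]
  exact Set.ncard_image_le (Set.toFinite _)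

lemma fact_zero (x : ℕ → A) : (Fact x 0).ncard = 1 := by
  have : Fact x 0 = {fun i : Fin 0 => x i} := by
    ext w
    simp only [Fact, Set.mem_setOf_eq, Set.mem_singleton_iff]
    constructor
    · intro _; funext i; exact absurd i.2 (Nat.not_lt_zero _)
    · intro _; exact ⟨0, fun i => absurd i.2 (Nat.not_lt_zero _)⟩
  rw [this, Set.ncard_singleton]

/-- If complexities of length `n` and `n+1` agree, a factor of length `n` determines
the next letter. -/
lemma key (x : ℕ → A) (n : ℕ) (heq : (Fact x (n + 1)).ncard ≤ (Fact x n).ncard)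
    {m₁ m₂ : ℕ} (h : ∀ i : Fin n, x (m₁ + i) = x (m₂ + i)) : x (m₁ + n) = x (m₂ + n) := by
  have himg : ((fun w : Fin (n + 1) → A => w ∘ Fin.castSucc) '' Fact x (n + 1)).ncard
      = (Fact x (n + 1)).ncard := by
    rw [fact_image]
    exact le_antisymm (mono x n) heq
  have hinj : Set.InjOn (fun w : Fin (n + 1) → A => w ∘ Fin.castSucc) (Fact x (n + 1)) :=
    Set.injOn_of_ncard_image_eq himg (Set.toFinite _)
  have h1 : (fun i : Fin (n + 1) => x (m₁ + i)) ∈ Fact x (n + 1) := ⟨m₁, fun _ => rfl⟩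
  have h2 : (fun i : Fin (n + 1) => x (m₂ + i)) ∈ Fact x (n + 1) := ⟨m₂, fun _ => rfl⟩
  have hres : (fun i : Fin (n + 1) => x (m₁ + i)) ∘ Fin.castSucc
      = (fun i : Fin (n + 1) => x (m₂ + i)) ∘ Fin.castSucc := by
    funext i
    simpa using h i
  have := hinj h1 h2 hres
  have := congrFun this (Fin.last n)
  simpa using this

end MHaux

theorem low_complexity_implies_eventually_periodic {A : Type*} [Fintype A]
    (x : ℕ → A) (n₀ : ℕ) (hn₀ : 1 ≤ n₀) (h : complexityN x n₀ ≤ n₀) :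
    ∃ T : ℕ, 1 ≤ T ∧ ∃ N : ℕ, ∀ m : ℕ, N ≤ m → x (m + T) = x m := by
  classical
  open MHaux in
  -- Find `n < n₀` where the complexity does not grow.
  have hcx : complexityN x n₀ = (Fact x n₀).ncard := rfl
  have hex : ∃ n, n < n₀ ∧ (Fact x (n + 1)).ncard ≤ (Fact x n).ncard := by
    by_contra hc
    push_neg at hc
    have hgrow : ∀ k, k ≤ n₀ → k + 1 ≤ (Fact x k).ncard := by
      intro k
      induction k with
      | zero => intro _; simp [fact_zero]
      | succ k ih =>
        intro hk
        have h1 := ih (le_of_lt hk)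
        have h2 := hc k hk
        omega
    have := hgrow n₀ le_rfl
    rw [hcx] at h
    omega
  obtain ⟨n, hn, hle⟩ := hex
  -- Pigeonhole: two equal windows of length `n`.
  have : ∃ a b : ℕ, a ≠ b ∧ (fun i : Fin n => x (a + i)) = (fun i : Fin n => x (b + i)) :=
    Finite.exists_ne_map_eq_of_infinite _
  obtain ⟨a, b, hab, hW⟩ := this
  -- wlog a < b
  obtain ⟨a, b, hab, hW⟩ : ∃ a b : ℕ, a < b ∧
      ∀ i : Fin n, x (a + i) = x (b + i) := by
    rcases lt_or_gt_of_ne hab with h' | h'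
    · exact ⟨a, b, h', fun i => congrFun hW i⟩
    · exact ⟨b, a, h', fun i => (congrFun hW i).symm⟩
  -- Propagate: windows at `a + k` and `b + k` agree for all `k`, plus the next letter.
  have main : ∀ k, ∀ i : Fin (n + 1), x (a + k + i) = x (b + k + i) := by
    intro k
    induction k with
    | zero =>
      intro i
      rcases lt_or_eq_of_le (Nat.lt_succ_iff.mp i.2) with hi | hi
      · simpa using hW ⟨i, hi⟩
      · have := key x n hle hW
        simpa [hi] using this
    | succ k ih =>
      have hW' : ∀ i : Fin n, x (a + (k + 1) + i) = x (b + (k + 1) + i) := by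
        intro i
        have := ih ⟨i + 1, by omega⟩
        simp only [Fin.val_mk] at this
        have e1 : a + k + ((i : ℕ) + 1) = a + (k + 1) + i := by omega
        have e2 : b + k + ((i : ℕ) + 1) = b + (k + 1) + i := by omega
        rw [e1, e2] at this
        exact this
      intro i
      rcases lt_or_eq_of_le (Nat.lt_succ_iff.mp i.2) with hi | hi
      · simpa using hW' ⟨i, hi⟩
      · have := key x n hle hW'
        simpa [hi] using this
  refine ⟨b - a, by omega, a + n, fun m hm => ?_⟩
  obtain ⟨k, rfl⟩ : ∃ k, m = a + n + k := ⟨m - (a + n), by omega⟩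
  have h1 : x (a + k + n) = x (b + k + n) := by
    simpa using main k (Fin.last n)
  have e1 : a + n + k + (b - a) = b + k + n := by omega
  have e2 : a + k + n = a + n + k := by omega
  rw [e1, ← h1, e2]
end

section
/- For irrational α and any real θ, the sequence x_m = χ_{[1-α,1)}({mα + θ}) (indicator of whether the fractional part of mα + θ lies in [1-α, 1)), where 0 < α < 1, is not eventually periodic. -/
/-!
Write `F m = {mα + θ}`. Since `0 < α < 1`, `F (m + 1) = F m + α - x m`, so if `x` is eventually
`T`-periodic then `F (m + T) - F m` is eventually a constant `d`, and the values `F (N + kT)` form an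
arithmetic progression with difference `d` inside `[0, 1)`; hence `d = 0`. But `d` is `Tα` minus an
integer, which is irrational.
-/

theorem fract_add_eq_ite {R : Type*} [CommRing R] [LinearOrder R] [IsStrictOrderedRing R]
    [FloorRing R] {a : R} (ha₀ : 0 ≤ a) (ha₁ : a < 1) (b : R) :
    Int.fract (b + a) = Int.fract b + a - if 1 - a ≤ Int.fract b then 1 else 0 := by
  have hb₀ := Int.fract_nonneg b
  have hb₁ := Int.fract_lt_one b
  rw [Int.fract_eq_iff]
  split_ifs with h
  · refine ⟨by linarith, by linarith, ⌊b⌋ + 1, ?_⟩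
    rw [← Int.self_sub_floor]
    push_cast
    ring
  · refine ⟨by linarith, by linarith, ⌊b⌋, ?_⟩
    rw [← Int.self_sub_floor]
    ring

theorem irrational_fract_sub_fract {a b : ℝ} (h : Irrational (a - b)) :
    Irrational (Int.fract a - Int.fract b) := by
  have : Int.fract a - Int.fract b = (a - b) - ((⌊a⌋ - ⌊b⌋ : ℤ) : ℝ) := by
    simp only [Int.fract]; push_cast; ring
  rw [this]
  exact h.sub_intCast _

theorem eq_zero_of_abs_le_of_succ_eq_add {K : Type*} [Field K] [LinearOrder K]
    [IsStrictOrderedRing K] [Archimedean K] {g : ℕ → K} {C d : K} (hb : ∀ k, |g k| ≤ C)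
    (hg : ∀ k, g (k + 1) = g k + d) : d = 0 := by
  have hg_eq : ∀ k : ℕ, g k = g 0 + k * d := by
    intro k
    induction k with
    | zero => simp
    | succ k ih => rw [hg, ih]; push_cast; ring
  by_contra hd
  have hd_pos : 0 < |d| := abs_pos.mpr hd
  obtain ⟨k, hk⟩ := exists_nat_gt (2 * C / |d|)
  have hk_le : k * |d| ≤ 2 * C := calc
    k * |d| = |g k - g 0| := by rw [hg_eq k, add_sub_cancel_left, abs_mul, Nat.abs_cast]
    _ ≤ |g k| + |g 0| := abs_sub _ _
    _ ≤ 2 * C := by linarith [hb k, hb 0]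
  rw [div_lt_iff₀ hd_pos] at hk
  linarith

theorem sturmian_coding_not_eventually_periodic
    (α θ : ℝ) (hα : Irrational α) (h0 : 0 < α) (h1 : α < 1)
    (x : ℤ → Bool)
    (hx : ∀ m : ℤ, x m = decide (Int.fract (m * α + θ) ∈ Set.Ico (1 - α) 1)) :
    ¬ ∃ T : ℤ, 1 ≤ T ∧ ∃ N : ℤ, ∀ m : ℤ, N ≤ m → x (m + T) = x m := by
  rintro ⟨T, hT, N, hper⟩
  set F : ℤ → ℝ := fun m => Int.fract (m * α + θ) with hF
  have hstep : ∀ m, F (m + 1) = F m + α - if x m then 1 else 0 := by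
    intro m
    simp only [hF, hx, Set.mem_Ico, Int.fract_lt_one, and_true, decide_eq_true_eq]
    rw [← fract_add_eq_ite h0.le h1]
    push_cast
    congr 1
    ring
  have hdiff : ∀ m, N ≤ m → F (m + T) - F m = F (N + T) - F N := by
    intro m hm
    induction m, hm using Int.leInduction with
    | base => rfl
    | succ m hm ih => rw [add_right_comm, hstep, hstep, hper m hm, ← ih]; ring
  have hF_abs : ∀ m, |F m| ≤ 1 := fun m =>
    abs_le.mpr ⟨by linarith [Int.fract_nonneg (m * α + θ)], (Int.fract_lt_one _).le⟩
  have hzero : F (N + T) - F N = 0 := by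
    refine eq_zero_of_abs_le_of_succ_eq_add (g := fun k : ℕ => F (N + k * T))
      (fun k => hF_abs _) (fun k => ?_)
    have hk : N ≤ N + k * T := by nlinarith
    rw [← hdiff _ hk, add_sub_cancel]
    congr 1
    push_cast
    ring
  refine (irrational_fract_sub_fract ?_).ne_zero hzero
  rw [show ((N + T : ℤ) : ℝ) * α + θ - (N * α + θ) = T * α by push_cast; ring]
  exact hα.intCast_mul (by omega)
end

section
/- Three Distance Theorem: for any irrational α ∈ (0,1) and any N ≥ 1, the points {α}, {2α}, ..., {Nα} partition the circle ℝ/ℤ into intervals having at most 3 distinct lengths. -/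
/-!
Write `arc α k ∈ (0, 1]` for the length of the arc from `{jα}` forward to `{(j + k)α}`. Let
`u ∈ [1, N]` minimise `arc α u` and `v ∈ [1, N]` minimise `arc α (-v)`, so that `{uα}` and `{vα}`
are the points nearest to `0` on either side. The point following `{mα}` is `{(m + u)α}` if
`m + u ≤ N`, else `{(m - v)α}` if `m > v`, and otherwise `{(m + u - v)α}`; hence every gap is
`arc α u`, `arc α (-v)` or their sum. In each case, that no point comes closer follows from the
additivity of arcs up to a full turn, `arc α j + arc α k ∈ {arc α (j + k), arc α (j + k) + 1}`,
together with `arc α k < 1` for `k ≠ 0`, which is where irrationality enters.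
-/

section ToIocMod

variable {G : Type*} [AddCommGroup G] [LinearOrder G] [IsOrderedAddMonoid G] [Archimedean G]
  {p : G} (hp : 0 < p)

theorem toIocMod_le_of_sub_eq_zsmul {a b c : G} (hc : a < c) (h : ∃ n : ℤ, c - b = n • p) :
    toIocMod hp a b ≤ c := by
  rcases le_or_gt c (a + p) with hcp | hcp
  · rw [(toIocMod_eq_toIocMod hp).2 h, (toIocMod_eq_self hp).2 ⟨hc, hcp⟩]
  · exact (toIocMod_le_right hp a b).trans hcp.le

theorem toIocMod_add_toIocMod_eq_or (a b : G) :
    toIocMod hp 0 a + toIocMod hp 0 b = toIocMod hp 0 (a + b) ∨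
      toIocMod hp 0 a + toIocMod hp 0 b = toIocMod hp 0 (a + b) + p := by
  set x := toIocMod hp 0 a
  set y := toIocMod hp 0 b
  have hsum : a + b = x + y + (toIocDiv hp 0 a + toIocDiv hp 0 b) • p := by
    conv_lhs => rw [← toIocMod_add_toIocDiv_zsmul hp 0 a, ← toIocMod_add_toIocDiv_zsmul hp 0 b]
    rw [add_zsmul]
    abel
  have hx := toIocMod_mem_Ioc hp 0 a
  have hy := toIocMod_mem_Ioc hp 0 b
  rw [zero_add] at hx hy
  rcases le_or_gt (x + y) p with hle | hgt
  · refine .inl ((toIocMod_eq_iff hp).2 ⟨⟨?_, by rwa [zero_add]⟩, _, hsum⟩).symm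
    exact add_pos hx.1 hy.1
  · refine .inr (eq_add_of_sub_eq ((toIocMod_eq_iff hp).2
      ⟨⟨?_, ?_⟩, toIocDiv hp 0 a + toIocDiv hp 0 b + 1, ?_⟩).symm)
    · exact sub_pos.2 hgt
    · rw [zero_add, sub_le_iff_le_add]; exact add_le_add hx.2 hy.2
    · rw [hsum, add_one_zsmul]; abel

end ToIocMod

noncomputable def arc (α : ℝ) (k : ℤ) : ℝ := toIocMod zero_lt_one 0 (k * α)

section Arc

variable {α : ℝ}

theorem arc_pos (α : ℝ) (k : ℤ) : 0 < arc α k := left_lt_toIocMod _ _ _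

theorem arc_le_one (α : ℝ) (k : ℤ) : arc α k ≤ 1 :=
  (toIocMod_le_right _ _ _).trans_eq (zero_add 1)

theorem arc_zero (α : ℝ) : arc α 0 = 1 := by
  simp [arc]

theorem arc_neg_left (α : ℝ) (k : ℤ) : arc (-α) k = arc α (-k) := by
  simp [arc]

theorem arc_add_eq_or (α : ℝ) (j k : ℤ) :
    arc α j + arc α k = arc α (j + k) ∨ arc α j + arc α k = arc α (j + k) + 1 := by
  simpa [arc, add_mul] using toIocMod_add_toIocMod_eq_or zero_lt_one (j * α) (k * α)

theorem arc_lt_one (hα : Irrational α) {k : ℤ} (hk : k ≠ 0) : arc α k < 1 := by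
  refine (arc_le_one α k).lt_of_ne fun h => ?_
  have := self_sub_toIocMod zero_lt_one (0 : ℝ) (k * α)
  rw [← arc, h, zsmul_one, sub_eq_iff_eq_add] at this
  exact (hα.intCast_mul hk).ne_int (toIocDiv zero_lt_one 0 (k * α) + 1) (by push_cast; linarith)

theorem arc_add_arc_neg (hα : Irrational α) {k : ℤ} (hk : k ≠ 0) : arc α k + arc α (-k) = 1 := by
  have := arc_lt_one hα hk
  rcases arc_add_eq_or α k (-k) with h | h <;> rw [add_neg_cancel, arc_zero] at h
  · exact h
  · linarith [arc_le_one α (-k)]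

theorem arc_le_of_le_arc_sub {w k : ℤ} (h : arc α w ≤ arc α (w - k)) : arc α w ≤ arc α k := by
  have := arc_le_one α (w - k)
  rcases arc_add_eq_or α k (w - k) with h' | h' <;> rw [add_sub_cancel] at h'
  · linarith [arc_pos α k]
  · linarith

theorem arc_eq_add_arc_sub (hα : Irrational α) {w k : ℤ} (hkw : k ≠ w) (h : arc α w ≤ arc α k) :
    arc α k = arc α w + arc α (k - w) := by
  have := arc_lt_one hα (sub_ne_zero.2 hkw)
  rcases arc_add_eq_or α w (k - w) with h' | h' <;> rw [add_sub_cancel] at h'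
  · exact h'.symm
  · linarith

variable {N u v : ℤ}

theorem arc_le_of_add_le (hu1 : 1 ≤ u) (hu : ∀ k, 1 ≤ k → k ≤ N → arc α u ≤ arc α k)
    {m k : ℤ} (hm1 : 1 ≤ m) (hmu : m + u ≤ N) (hk1 : 1 ≤ m + k) (hkN : m + k ≤ N) :
    arc α u ≤ arc α k := by
  rcases lt_or_ge 0 k with hk | hk
  · exact hu k (by omega) (by omega)
  · exact arc_le_of_le_arc_sub (hu (u - k) (by omega) (by omega))

theorem arc_neg_le_of_le_sub (hv1 : 1 ≤ v) (hv : ∀ k, 1 ≤ k → k ≤ N → arc α (-v) ≤ arc α (-k))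
    {m k : ℤ} (hmN : m ≤ N) (hmv : 1 ≤ m - v) (hk1 : 1 ≤ m + k) (hkN : m + k ≤ N) :
    arc α (-v) ≤ arc α k := by
  simpa [arc_neg_left] using arc_le_of_add_le (α := -α) (m := N + 1 - m) (k := -k) hv1
    (by simpa [arc_neg_left] using hv) (by omega) (by omega) (by omega) (by omega)

theorem arc_add_arc_neg_le_of_nonneg (hα : Irrational α) (huN : u ≤ N)
    (hu : ∀ k, 1 ≤ k → k ≤ N → arc α u ≤ arc α k)
    (hv : ∀ k, 1 ≤ k → k ≤ N → arc α (-v) ≤ arc α (-k)) {k : ℤ} (hk0 : 0 ≤ k) (hku : k < u) :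
    arc α u + arc α (-v) ≤ arc α k := by
  have huk : arc α u ≤ arc α k := by
    rcases hk0.eq_or_lt with rfl | hk0
    · exact (arc_le_one α u).trans_eq (arc_zero α).symm
    · exact hu k (by omega) (by omega)
  have hvk := hv (u - k) (by omega) (by omega)
  rw [neg_sub] at hvk
  rw [arc_eq_add_arc_sub hα hku.ne huk]
  linarith

theorem arc_add_arc_neg_le (hα : Irrational α) (huN : u ≤ N) (hvN : v ≤ N)
    (hu : ∀ k, 1 ≤ k → k ≤ N → arc α u ≤ arc α k)
    (hv : ∀ k, 1 ≤ k → k ≤ N → arc α (-v) ≤ arc α (-k)) {k : ℤ} (hvk : -v < k) (hku : k < u) :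
    arc α u + arc α (-v) ≤ arc α k := by
  rcases le_or_gt 0 k with hk | hk
  · exact arc_add_arc_neg_le_of_nonneg hα huN hu hv hk hku
  · have := arc_add_arc_neg_le_of_nonneg (α := -α) (u := v) (v := u) (k := -k) hα.neg hvN
      (by simpa [arc_neg_left] using hv) (by simpa [arc_neg_left] using hu) (by omega) (by omega)
    simp only [arc_neg_left, neg_neg] at this
    linarith

theorem arc_sub_eq_add (hα : Irrational α) (hv1 : 1 ≤ v) (hvN : v ≤ N)
    (hu : ∀ k, 1 ≤ k → k ≤ N → arc α u ≤ arc α k) : arc α (u - v) = arc α u + arc α (-v) := by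
  have hsum := arc_add_arc_neg hα (show v ≠ 0 by omega)
  have huv := hu v hv1 hvN
  rcases arc_add_eq_or α u (-v) with h | h <;> rw [← sub_eq_add_neg] at h
  · exact h.symm
  · linarith [arc_pos α (u - v)]

theorem exists_next_arc_mem (hα : Irrational α) (hu1 : 1 ≤ u) (huN : u ≤ N) (hv1 : 1 ≤ v)
    (hvN : v ≤ N) (hu : ∀ k, 1 ≤ k → k ≤ N → arc α u ≤ arc α k)
    (hv : ∀ k, 1 ≤ k → k ≤ N → arc α (-v) ≤ arc α (-k)) {m : ℤ} (hm1 : 1 ≤ m) (hmN : m ≤ N) :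
    ∃ k, 1 ≤ m + k ∧ m + k ≤ N ∧ (∀ j, 1 ≤ m + j → m + j ≤ N → arc α k ≤ arc α j) ∧
      arc α k ∈ ({arc α u, arc α (-v), arc α u + arc α (-v)} : Set ℝ) := by
  by_cases hmu : m + u ≤ N
  · exact ⟨u, by omega, hmu, fun j => arc_le_of_add_le hu1 hu hm1 hmu, by simp⟩
  by_cases hmv : 1 ≤ m - v
  · exact ⟨-v, by omega, by omega, fun j => arc_neg_le_of_le_sub hv1 hv hmN hmv, by simp⟩
  have hsum := arc_sub_eq_add hα hv1 hvN hu
  refine ⟨u - v, by omega, by omega, fun j hj1 hjN => ?_, by simp [hsum]⟩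
  rw [hsum]
  exact arc_add_arc_neg_le hα huN hvN hu hv (by omega) (by omega)

end Arc

theorem fract_fract_add_toIocMod (x y : ℝ) :
    Int.fract (Int.fract x + toIocMod zero_lt_one 0 (y - x)) = Int.fract y := by
  refine Int.fract_eq_fract.2 ⟨-⌊x⌋ - toIocDiv zero_lt_one 0 (y - x), ?_⟩
  have := toIocMod_add_toIocDiv_zsmul zero_lt_one (0 : ℝ) (y - x)
  rw [zsmul_one] at this
  rw [Int.fract]
  push_cast
  linarith

theorem toIocMod_le_of_fract_fract_add_eq {x y t : ℝ} (ht : 0 < t)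
    (h : Int.fract (Int.fract x + t) = Int.fract y) : toIocMod zero_lt_one 0 (y - x) ≤ t := by
  obtain ⟨z, hz⟩ := Int.fract_eq_fract.1 h
  refine toIocMod_le_of_sub_eq_zsmul _ ht ⟨z + ⌊x⌋, ?_⟩
  rw [Int.fract] at hz
  rw [zsmul_one]
  push_cast
  linarith

theorem arc_sub_natCast (α : ℝ) (m n : ℕ) :
    arc α (n - m) = toIocMod zero_lt_one 0 (n * α - m * α) := by
  simp [arc, sub_mul]

theorem isLeast_arc {α : ℝ} {N m : ℕ} {k : ℤ} (hk1 : 1 ≤ m + k) (hkN : m + k ≤ N)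
    (hk : ∀ j : ℤ, 1 ≤ m + j → m + j ≤ N → arc α k ≤ arc α j) :
    IsLeast {t | 0 < t ∧ Int.fract (Int.fract (m * α) + t) ∈
      {y | ∃ n : ℕ, 1 ≤ n ∧ n ≤ N ∧ y = Int.fract (n * α)}} (arc α k) := by
  refine ⟨⟨arc_pos α k, ?_⟩, ?_⟩
  · obtain ⟨n, hn⟩ : ∃ n : ℕ, (n : ℤ) = m + k :=
      ⟨((m : ℤ) + k).toNat, Int.toNat_of_nonneg (by omega)⟩
    refine ⟨n, by omega, by omega, ?_⟩
    rw [show k = n - m by omega, arc_sub_natCast, fract_fract_add_toIocMod]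
  · rintro t ⟨ht, n, hn1, hnN, hn⟩
    calc arc α k ≤ arc α (n - m) := hk (n - m) (by omega) (by omega)
      _ = _ := arc_sub_natCast α m n
      _ ≤ t := toIocMod_le_of_fract_fract_add_eq ht hn

theorem three_distance_theorem_general (α : ℝ) (hα : Irrational α)
    (N : ℕ) (hN : 1 ≤ N) :
    letI S : Set ℝ := {y | ∃ m : ℕ, 1 ≤ m ∧ m ≤ N ∧ y = Int.fract (m * α)}
    letI gap : ℝ → ℝ := fun s => sInf {t : ℝ | 0 < t ∧ Int.fract (s + t) ∈ S}
    Set.ncard {g : ℝ | ∃ s ∈ S, g = gap s} ≤ 3 := by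
  have hne : (Finset.Icc (1 : ℤ) N).Nonempty := ⟨1, by simp [hN]⟩
  obtain ⟨u, hu, hu_min⟩ := (Finset.Icc (1 : ℤ) N).exists_min_image (arc α) hne
  obtain ⟨v, hv, hv_min⟩ := (Finset.Icc (1 : ℤ) N).exists_min_image (fun k => arc α (-k)) hne
  simp only [Finset.mem_Icc] at hu hv hu_min hv_min
  refine (Set.ncard_le_ncard (t := {arc α u, arc α (-v), arc α u + arc α (-v)}) ?_
    (Set.toFinite _)).trans ?_
  · rintro _ ⟨_, ⟨m, hm1, hmN, rfl⟩, rfl⟩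
    obtain ⟨k, hk1, hkN, hk, hk_mem⟩ := exists_next_arc_mem hα hu.1 hu.2 hv.1 hv.2
      (fun k h1 h2 => hu_min k ⟨h1, h2⟩) (fun k h1 h2 => hv_min k ⟨h1, h2⟩)
      (m := m) (by omega) (by omega)
    beta_reduce
    rwa [(isLeast_arc hk1 hkN hk).csInf_eq]
  · rw [← Finset.coe_pair, ← Finset.coe_insert, Set.ncard_coe_finset]
    exact Finset.card_le_three

/-- Three Distance Theorem: for irrational `α ∈ (0,1)` and `N ≥ 1`, the points
`{α}, {2α}, …, {Nα}` on the circle `ℝ/ℤ` determine gaps (arc lengths to the next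
point in cyclic order) of at most 3 distinct values. -/
theorem three_distance_theorem (α : ℝ) (hα : Irrational α) (h0 : 0 < α) (h1 : α < 1)
    (N : ℕ) (hN : 1 ≤ N) :
    letI S : Set ℝ := {y | ∃ m : ℕ, 1 ≤ m ∧ m ≤ N ∧ y = Int.fract (m * α)}
    letI gap : ℝ → ℝ := fun s => sInf {t : ℝ | 0 < t ∧ Int.fract (s + t) ∈ S}
    Set.ncard {g : ℝ | ∃ s ∈ S, g = gap s} ≤ 3 :=
  three_distance_theorem_general α hα N hN
end
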